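/- arXiv:2310.01822 — 3 statements merged into one kernel-verified Lean document; each statement's English description precedes it below -/
import Mathlib

section
/- Let n ∈ ℕ with n ≡ 6 (mod 8), let V = V1 ∪ V2 be a partition of an n-element set with |V1| = (3n−2)/4, let M be a perfect matching on V2 (a partition of V2 into 2-element sets), and let H be the simplicial complex on V whose edge set is the downward closure of {{a,b,c} : {a,b} ∈ M, c ∈ V1} ∪ {all 2-element subsets of V1}. Then H is B-free and e(H) = (9/8)·binom(n,2) + (21/16)·n + 5/4; in particular, ex(n,B) ≥ (9/8)·binom(n,2) + (21/16)·n + 5/4. -/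
/-!
Every 3-edge of `H` is a triangle `{c} ∪ m` with `c ∈ V1` and `m ∈ M`, and every nonempty edge
avoiding `V1` lies inside a matching edge. The two triangles of a copy of `B` meet in exactly one
vertex; since the matching edges are disjoint and avoid `V1`, this vertex must be the common apex
`c ∈ V1` and the two matching edges differ. The edge `v3v4` would then join two different matching
edges outside `V1`, which is impossible.

For the count, split an edge `e` into its traces `A = e ∩ V1` and `C = e \ V1`: either `C = ∅` and
`|A| ≤ 2`, or `|A| ≤ 1` and `C` is one of the `3|M|` nonempty subsets of a matching edge. Hence
`e(H) = 1 + s + (s choose 2) + 3(1 + s)|M|` with `s = (3n-2)/4` and `|M| = (n+2)/8`.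
-/

open Finset

/-- `E` is the edge set of a simplicial complex: it is closed under taking subsets. -/
def IsComplex {α : Type*} [DecidableEq α] (E : Finset (Finset α)) : Prop :=
  ∀ e ∈ E, ∀ f ⊆ e, f ∈ E

/-- `H` contains a copy of `F`: an injection of the vertices mapping edges to edges. -/
def HasCopy {α β : Type*} [DecidableEq β]
    (F : Finset (Finset α)) (H : Finset (Finset β)) : Prop :=
  ∃ f : α → β, Function.Injective f ∧ ∀ e ∈ F, e.image f ∈ H

/-- downward closure of a family of sets -/
def dClosure {α : Type*} [DecidableEq α] (S : Finset (Finset α)) : Finset (Finset α) :=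
  S.biUnion Finset.powerset

/-- `ex(n,F)`: the extremal number for simplicial complexes -/
noncomputable def exSC {α : Type*} (n : ℕ) (F : Finset (Finset α)) : ℕ :=
  sSup {m | ∃ E : Finset (Finset (Fin n)), IsComplex E ∧ ¬ HasCopy F E ∧ E.card = m}

/-- `ex^(k)(n,F)`: the extremal number for `k`-uniform hypergraphs -/
noncomputable def exUnif {α : Type*} (k n : ℕ) (F : Finset (Finset α)) : ℕ :=
  sSup {m | ∃ E : Finset (Finset (Fin n)),
    (∀ e ∈ E, e.card = k) ∧ ¬ HasCopy F E ∧ E.card = m}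

/-- the complex `B`: downward closure of `{{v3,v4},{v1,v2,v3},{v1,v4,v5}}`
(vertices `v1,…,v5` are `0,…,4`) -/
def B : Finset (Finset (Fin 5)) :=
  dClosure {{2, 3}, {0, 1, 2}, {0, 3, 4}}

section Copies

variable {α β γ : Type*}

theorem mem_dClosure [DecidableEq α] {S : Finset (Finset α)} {e : Finset α} :
    e ∈ dClosure S ↔ ∃ s ∈ S, e ⊆ s := by
  simp [dClosure]

theorem isComplex_dClosure [DecidableEq α] (S : Finset (Finset α)) : IsComplex (dClosure S) :=
  fun _ he _ hfe => by
    obtain ⟨s, hs, hes⟩ := mem_dClosure.1 he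
    exact mem_dClosure.2 ⟨s, hs, hfe.trans hes⟩

theorem HasCopy.trans [DecidableEq β] [DecidableEq γ] {F : Finset (Finset α)}
    {G : Finset (Finset β)} {H : Finset (Finset γ)} (hFG : HasCopy F G) (hGH : HasCopy G H) :
    HasCopy F H := by
  obtain ⟨f, hf, hfF⟩ := hFG
  obtain ⟨g, hg, hgG⟩ := hGH
  refine ⟨g ∘ f, hg.comp hf, fun e he => ?_⟩
  rw [← image_image]
  exact hgG _ (hfF e he)

theorem hasCopy_map_finsetCongr [DecidableEq β] [DecidableEq γ] (σ : β ≃ γ)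
    (E : Finset (Finset β)) : HasCopy (E.map σ.finsetCongr.toEmbedding) E := by
  refine ⟨σ.symm, σ.symm.injective, fun e he => ?_⟩
  obtain ⟨s, hs, rfl⟩ := mem_map.1 he
  simpa [Equiv.finsetCongr_apply, map_eq_image, image_image] using hs

theorem IsComplex.map_finsetCongr [DecidableEq β] [DecidableEq γ] {E : Finset (Finset β)}
    (hE : IsComplex E) (σ : β ≃ γ) : IsComplex (E.map σ.finsetCongr.toEmbedding) := by
  intro e he f hfe
  obtain ⟨s, hs, rfl⟩ := mem_map.1 he
  obtain ⟨u, hus, rfl⟩ := subset_map_iff.1 hfe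
  exact mem_map_of_mem _ (hE s hs u hus)

theorem card_le_exSC [Fintype β] [DecidableEq β] {n : ℕ} (hβ : Fintype.card β = n)
    {F : Finset (Finset α)} {E : Finset (Finset β)} (hE : IsComplex E) (hF : ¬ HasCopy F E) :
    #E ≤ exSC n F := by
  let σ : β ≃ Fin n := Fintype.equivFinOfCardEq hβ
  refine le_csSup ⟨2 ^ n, ?_⟩ ⟨E.map σ.finsetCongr.toEmbedding, hE.map_finsetCongr σ,
    fun h => hF (h.trans (hasCopy_map_finsetCongr σ E)), card_map _⟩
  rintro m ⟨G, -, -, rfl⟩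
  simpa using card_le_univ G

end Copies

theorem card_powerset_filter_card_le {α : Type*} (s : Finset α) (k : ℕ) :
    #(s.powerset.filter (#· ≤ k)) = ∑ i ∈ range (k + 1), (#s).choose i := by
  classical
  have : s.powerset.filter (#· ≤ k) = (range (k + 1)).biUnion (powersetCard · s) := by
    ext t
    simp [and_comm]
  rw [this, card_biUnion ((pairwise_disjoint_powersetCard s).set_pairwise _)]
  simp [card_powersetCard]

section MatchingComplex

variable {V : Type*} [DecidableEq V] {V1 : Finset V} {M : Finset (Finset V)}

variable (V1 M) in
def matchingComplex : Finset (Finset V) :=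
  dClosure ((M.biUnion fun m => V1.image fun c => insert c m) ∪ V1.powersetCard 2)

theorem mem_matchingComplex {e : Finset V} :
    e ∈ matchingComplex V1 M ↔
      (∃ m ∈ M, ∃ c ∈ V1, e ⊆ insert c m) ∨ ∃ u ⊆ V1, #u = 2 ∧ e ⊆ u := by
  simp only [matchingComplex, mem_dClosure, mem_union, mem_biUnion, mem_image,
    mem_powersetCard]
  constructor
  · rintro ⟨s, ⟨m, hm, c, hc, rfl⟩ | ⟨huV, hu⟩, hes⟩
    exacts [Or.inl ⟨m, hm, c, hc, hes⟩, Or.inr ⟨s, huV, hu, hes⟩]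
  · rintro (⟨m, hm, c, hc, he⟩ | ⟨u, huV, hu, he⟩)
    exacts [⟨_, Or.inl ⟨m, hm, c, hc, rfl⟩, he⟩, ⟨u, Or.inr ⟨huV, hu⟩, he⟩]

theorem exists_eq_insert_of_mem_matchingComplex (hM2 : ∀ m ∈ M, #m = 2) {e : Finset V}
    (he : e ∈ matchingComplex V1 M) (he3 : #e = 3) : ∃ c ∈ V1, ∃ m ∈ M, e = insert c m := by
  rcases mem_matchingComplex.1 he with ⟨m, hm, c, hc, hsub⟩ | ⟨u, -, hu, hsub⟩
  · have : #(insert c m) ≤ 3 := (card_insert_le c m).trans_eq (by rw [hM2 m hm])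
    exact ⟨c, hc, m, hm, eq_of_subset_of_card_le hsub (by omega)⟩
  · have := card_le_card hsub
    omega

theorem exists_subset_of_mem_matchingComplex {e : Finset V} (he : e ∈ matchingComplex V1 M)
    (hne : e.Nonempty) (hdisj : Disjoint e V1) : ∃ m ∈ M, e ⊆ m := by
  rcases mem_matchingComplex.1 he with ⟨m, hm, c, hc, hsub⟩ | ⟨u, huV, -, hsub⟩
  · refine ⟨m, hm, fun x hx => ?_⟩
    have hxc : x ≠ c := fun h => disjoint_left.1 hdisj hx (h ▸ hc)
    exact (mem_insert.1 (hsub hx)).resolve_left hxc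
  · obtain ⟨x, hx⟩ := hne
    exact absurd (huV (hsub hx)) (disjoint_left.1 hdisj hx)

theorem eq_of_insert_inter_insert_eq_singleton (hM2 : ∀ m ∈ M, #m = 2)
    (hM : (M : Set (Finset V)).PairwiseDisjoint id) (hMV1 : ∀ m ∈ M, Disjoint m V1)
    {c c' x : V} {m m' : Finset V} (hc : c ∈ V1) (hc' : c' ∈ V1) (hm : m ∈ M) (hm' : m' ∈ M)
    (h : insert c m ∩ insert c' m' = {x}) : c = x ∧ c' = x ∧ m ≠ m' := by
  have hx : x ∈ insert c m ∧ x ∈ insert c' m' := mem_inter.1 (h ▸ mem_singleton_self x)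
  have hmm' : m ≠ m' := by
    rintro rfl
    have := card_le_card (h ▸ inter_subset_inter (subset_insert c m) (subset_insert c' m))
    rw [inter_self, hM2 m hm, card_singleton] at this
    omega
  have hxm : x ∉ m := fun hxm => by
    have hxc' : x ≠ c' := fun h => disjoint_left.1 (hMV1 m hm) hxm (h ▸ hc')
    exact hmm' (hM.elim_finset hm hm' x hxm ((mem_insert.1 hx.2).resolve_left hxc'))
  have hxm' : x ∉ m' := fun hxm' => by
    have hxc : x ≠ c := fun h => disjoint_left.1 (hMV1 m' hm') hxm' (h ▸ hc)
    exact hmm' (hM.elim_finset hm hm' x ((mem_insert.1 hx.1).resolve_left hxc) hxm')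
  exact ⟨((mem_insert.1 hx.1).resolve_right hxm).symm,
    ((mem_insert.1 hx.2).resolve_right hxm').symm, hmm'⟩

theorem not_hasCopy_B_matchingComplex (hM2 : ∀ m ∈ M, #m = 2)
    (hM : (M : Set (Finset V)).PairwiseDisjoint id) (hMV1 : ∀ m ∈ M, Disjoint m V1) :
    ¬ HasCopy B (matchingComplex V1 M) := by
  rintro ⟨f, hf, hfB⟩
  have hT1 := hfB {0, 1, 2} (by decide)
  have hT2 := hfB {0, 3, 4} (by decide)
  have hT12 : ({0, 1, 2} : Finset (Fin 5)).image f ∩ ({0, 3, 4} : Finset (Fin 5)).image f =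
      {f 0} := by
    rw [← image_inter _ _ hf]
    rfl
  obtain ⟨c1, hc1, m1, hm1, hT1_eq⟩ :=
    exists_eq_insert_of_mem_matchingComplex hM2 hT1 (by rw [card_image_of_injective _ hf]; rfl)
  obtain ⟨c2, hc2, m2, hm2, hT2_eq⟩ :=
    exists_eq_insert_of_mem_matchingComplex hM2 hT2 (by rw [card_image_of_injective _ hf]; rfl)
  rw [hT1_eq, hT2_eq] at hT12
  obtain ⟨rfl, rfl, hm12⟩ := eq_of_insert_inter_insert_eq_singleton hM2 hM hMV1 hc1 hc2 hm1 hm2 hT12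
  have hf2 : f 2 ∈ m1 := by
    have : f 2 ∈ insert (f 0) m1 := hT1_eq ▸ mem_image_of_mem f (by decide)
    exact (mem_insert.1 this).resolve_left (hf.ne (by decide))
  have hf3 : f 3 ∈ m2 := by
    have : f 3 ∈ insert (f 0) m2 := hT2_eq ▸ mem_image_of_mem f (by decide)
    exact (mem_insert.1 this).resolve_left (hf.ne (by decide))
  have hdisj : Disjoint (({2, 3} : Finset (Fin 5)).image f) V1 := by
    simp only [image_insert, image_singleton, disjoint_insert_left, disjoint_singleton_left]
    exact ⟨disjoint_left.1 (hMV1 m1 hm1) hf2, disjoint_left.1 (hMV1 m2 hm2) hf3⟩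
  obtain ⟨m, hm, hsub⟩ :=
    exists_subset_of_mem_matchingComplex (hfB {2, 3} (by decide)) (by simp) hdisj
  exact hm12 ((hM.elim_finset hm1 hm (f 2) hf2 (hsub (by simp))).trans
    (hM.elim_finset hm hm2 (f 3) (hsub (by simp)) hf3))


variable (M) in
def matchingParts : Finset (Finset V) :=
  M.biUnion fun m => m.powerset.erase ∅

theorem mem_matchingParts {C : Finset V} :
    C ∈ matchingParts M ↔ C ≠ ∅ ∧ ∃ m ∈ M, C ⊆ m := by
  simp only [matchingParts, mem_biUnion, mem_erase, mem_powerset]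
  aesop

theorem card_matchingParts (hM2 : ∀ m ∈ M, #m = 2)
    (hM : (M : Set (Finset V)).PairwiseDisjoint id) : #(matchingParts M) = 3 * #M := by
  have hdisj : (M : Set (Finset V)).PairwiseDisjoint fun m => m.powerset.erase ∅ := by
    intro m hm m' hm' hmm'
    refine disjoint_left.2 fun C hC hC' => ?_
    simp only [mem_erase, mem_powerset] at hC hC'
    obtain ⟨x, hx⟩ := nonempty_iff_ne_empty.2 hC.1
    exact hmm' (hM.elim_finset hm hm' x (hC.2 hx) (hC'.2 hx))
  rw [matchingParts, card_biUnion hdisj, sum_const_nat fun m hm => ?_, mul_comm]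
  rw [card_erase_of_mem (empty_mem_powerset m), card_powerset, hM2 m hm]
  rfl

theorem union_mem_matchingComplex_iff (hV1 : 2 ≤ #V1) (hMV1 : ∀ m ∈ M, Disjoint m V1)
    {A C : Finset V} (hA : A ⊆ V1) (hC : Disjoint C V1) :
    A ∪ C ∈ matchingComplex V1 M ↔ (C = ∅ ∧ #A ≤ 2) ∨ (C ∈ matchingParts M ∧ #A ≤ 1) := by
  rw [mem_matchingComplex, mem_matchingParts]
  constructor
  · rintro (⟨m, hm, c, hc, hsub⟩ | ⟨u, huV, hu, hsub⟩)
    · have hAc : A ⊆ {c} := fun a ha => by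
        have ham : a ∉ m := fun h => disjoint_left.1 (hMV1 m hm) h (hA ha)
        exact mem_singleton.2 ((mem_insert.1 (hsub (mem_union_left C ha))).resolve_right ham)
      have hCm : C ⊆ m := fun x hx => by
        have hxc : x ≠ c := fun h => disjoint_left.1 hC hx (h ▸ hc)
        exact (mem_insert.1 (hsub (mem_union_right A hx))).resolve_left hxc
      have hA1 : #A ≤ 1 := card_le_card hAc
      by_cases hC0 : C = ∅
      exacts [Or.inl ⟨hC0, by omega⟩, Or.inr ⟨⟨hC0, m, hm, hCm⟩, hA1⟩]
    · left
      have hCV1 : C ⊆ V1 := subset_union_right.trans (hsub.trans huV)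
      exact ⟨disjoint_self.1 (hC.mono_right hCV1), hu ▸ card_le_card (subset_union_left.trans hsub)⟩
  · rintro (⟨rfl, hA2⟩ | ⟨⟨-, m, hm, hCm⟩, hA1⟩)
    · obtain ⟨u, hAu, huV, hu⟩ := exists_subsuperset_card_eq hA hA2 hV1
      exact Or.inr ⟨u, huV, hu, by rwa [union_empty]⟩
    · obtain ⟨u, hAu, huV, hu⟩ := exists_subsuperset_card_eq hA hA1 (by omega)
      obtain ⟨c, rfl⟩ := card_eq_one.1 hu
      refine Or.inl ⟨m, hm, c, singleton_subset_iff.1 huV, union_subset ?_ (hCm.trans ?_)⟩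
      exacts [hAu.trans (singleton_subset_iff.2 (mem_insert_self c m)), subset_insert c m]

theorem matchingComplex_eq_image (hV1 : 2 ≤ #V1) (hMV1 : ∀ m ∈ M, Disjoint m V1) :
    matchingComplex V1 M =
      (V1.powerset.filter (#· ≤ 2) ×ˢ {∅} ∪ V1.powerset.filter (#· ≤ 1) ×ˢ matchingParts M).image
        fun p => p.1 ∪ p.2 := by
  ext e
  simp only [mem_image, mem_union, mem_product, mem_filter, mem_powerset, mem_singleton,
    Prod.exists]
  have hsplit : e ∩ V1 ∪ e \ V1 = e := by rw [union_comm, sdiff_union_inter]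
  constructor
  · intro he
    rw [← hsplit, union_mem_matchingComplex_iff hV1 hMV1 inter_subset_right
      sdiff_disjoint] at he
    refine ⟨e ∩ V1, e \ V1, ?_, hsplit⟩
    rcases he with ⟨h1, h2⟩ | ⟨h1, h2⟩
    exacts [Or.inl ⟨⟨inter_subset_right, h2⟩, h1⟩, Or.inr ⟨⟨inter_subset_right, h2⟩, h1⟩]
  · rintro ⟨A, C, ⟨⟨hA, hA2⟩, rfl⟩ | ⟨⟨hA, hA1⟩, hC⟩, rfl⟩
    · exact (union_mem_matchingComplex_iff hV1 hMV1 hA (disjoint_empty_left V1)).2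
        (Or.inl ⟨rfl, hA2⟩)
    · obtain ⟨-, m, hm, hCm⟩ := mem_matchingParts.1 hC
      exact (union_mem_matchingComplex_iff hV1 hMV1 hA ((hMV1 m hm).mono_left hCm)).2
        (Or.inr ⟨hC, hA1⟩)

theorem card_matchingComplex (hV1 : 2 ≤ #V1) (hM2 : ∀ m ∈ M, #m = 2)
    (hM : (M : Set (Finset V)).PairwiseDisjoint id) (hMV1 : ∀ m ∈ M, Disjoint m V1) :
    #(matchingComplex V1 M) = 1 + #V1 + (#V1).choose 2 + (1 + #V1) * (3 * #M) := by
  have htraces : ∀ {A C : Finset V}, A ⊆ V1 → Disjoint C V1 →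
      (A ∪ C) ∩ V1 = A ∧ (A ∪ C) \ V1 = C :=
    fun hA hC => ⟨by rw [union_inter_distrib_right, inter_eq_left.2 hA,
        disjoint_iff_inter_eq_empty.1 hC, union_empty],
      by rw [union_sdiff_distrib, sdiff_eq_empty_iff_subset.2 hA, empty_union, hC.sdiff_eq_left]⟩
  have hinj : Set.InjOn (fun p : Finset V × Finset V => p.1 ∪ p.2)
      ↑(V1.powerset.filter (#· ≤ 2) ×ˢ {∅} ∪ V1.powerset.filter (#· ≤ 1) ×ˢ matchingParts M) := by
    have hsides : ∀ p ∈ V1.powerset.filter (#· ≤ 2) ×ˢ {∅} ∪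
        V1.powerset.filter (#· ≤ 1) ×ˢ matchingParts M, p.1 ⊆ V1 ∧ Disjoint p.2 V1 := by
      simp only [mem_union, mem_product, mem_filter, mem_powerset, mem_singleton]
      rintro ⟨A, C⟩ (⟨⟨hA, -⟩, rfl⟩ | ⟨⟨hA, -⟩, hC⟩)
      · exact ⟨hA, disjoint_empty_left V1⟩
      · obtain ⟨-, m, hm, hCm⟩ := mem_matchingParts.1 hC
        exact ⟨hA, (hMV1 m hm).mono_left hCm⟩
    intro p hp q hq hpq
    obtain ⟨hp1, hp2⟩ := htraces (hsides p hp).1 (hsides p hp).2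
    obtain ⟨hq1, hq2⟩ := htraces (hsides q hq).1 (hsides q hq).2
    exact Prod.ext (hp1.symm.trans ((congrArg (· ∩ V1) hpq).trans hq1))
      (hp2.symm.trans ((congrArg (· \ V1) hpq).trans hq2))
  have hdisj : Disjoint (V1.powerset.filter (#· ≤ 2) ×ˢ {∅})
      (V1.powerset.filter (#· ≤ 1) ×ˢ matchingParts M) :=
    disjoint_product.2 (Or.inr (disjoint_singleton_left.2 fun h => (mem_matchingParts.1 h).1 rfl))
  rw [matchingComplex_eq_image hV1 hMV1, card_image_of_injOn hinj, card_union_of_disjoint hdisj,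
    card_product, card_product, card_singleton, card_powerset_filter_card_le,
    card_powerset_filter_card_le, card_matchingParts hM2 hM]
  simp [sum_range_succ]

end MatchingComplex

theorem statement2 {V : Type*} [Fintype V] [DecidableEq V] (n : ℕ)
    (hcard : Fintype.card V = n) (hmod : n % 8 = 6)
    (V1 : Finset V) (hV1 : 4 * V1.card = 3 * n - 2)
    (M : Finset (Finset V))
    (hM2 : ∀ m ∈ M, m.card = 2)
    (hMdisj : ∀ m ∈ M, ∀ m' ∈ M, m ≠ m' → Disjoint m m')
    (hMcover : M.biUnion id = V1ᶜ)
    (E : Finset (Finset V))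
    (hE : E = dClosure
      ((M.biUnion fun m => V1.image fun c => insert c m) ∪ V1.powersetCard 2)) :
    ¬ HasCopy B E ∧
    (E.card : ℚ) = 9 / 8 * (n.choose 2 : ℚ) + 21 / 16 * (n : ℚ) + 5 / 4 ∧
    9 / 8 * (n.choose 2 : ℚ) + 21 / 16 * (n : ℚ) + 5 / 4 ≤ (exSC n B : ℚ) := by
  have hM : (M : Set (Finset V)).PairwiseDisjoint id := hMdisj
  have hMV1 : ∀ m ∈ M, Disjoint m V1 := fun m hm => by
    rw [← subset_compl_iff_disjoint_right, ← hMcover]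
    exact subset_biUnion_of_mem id hm
  change E = matchingComplex V1 M at hE
  subst hE
  have hfree := not_hasCopy_B_matchingComplex hM2 hM hMV1
  have hMcard : 2 * #M = #V1ᶜ := by
    rw [← hMcover, card_biUnion hM]
    exact ((sum_const_nat hM2).trans (mul_comm _ _)).symm
  have hcompl : #V1 + #V1ᶜ = n := hcard ▸ card_add_card_compl V1
  have hcount : (#(matchingComplex V1 M) : ℚ) =
      9 / 8 * (n.choose 2 : ℚ) + 21 / 16 * (n : ℚ) + 5 / 4 := by
    have hV1q : (#V1 : ℚ) * 4 + 2 = 3 * n := by exact_mod_cast (by omega : #V1 * 4 + 2 = 3 * n)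
    have hMq : (#M : ℚ) * 8 = n + 2 := by exact_mod_cast (by omega : #M * 8 = n + 2)
    rw [card_matchingComplex (by omega) hM2 hM hMV1]
    push_cast [Nat.cast_choose_two]
    rw [show (#V1 : ℚ) = (3 * n - 2) / 4 by linarith, show (#M : ℚ) = (n + 2) / 8 by linarith]
    ring
  refine ⟨hfree, hcount, hcount ▸ ?_⟩
  exact_mod_cast card_le_exSC hcard (isComplex_dClosure _) hfree
end

section
/- Let F be the simplicial complex on six vertices v1,…,v6 whose edge set is the downward closure of {{v1,v2,v3}, {v4,v5,v6}, {v1,v4}}. Then there is a constant C ∈ ℕ such that n² − n + 2 ≤ ex(n,F) for every n ≥ 1 and ex(n,F) ≤ n² − n + C for every n ∈ ℕ. -/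
open Finset

/-- two disjoint 3-edges joined by a 2-edge: downward closure of
`{{v1,v2,v3},{v4,v5,v6},{v1,v4}}` with `v1,…,v6 = 0,…,5` -/
def Fmatch : Finset (Finset (Fin 6)) :=
  dClosure {{0, 1, 2}, {3, 4, 5}, {0, 3}}


/-! ### Auxiliary lemmas -/


lemma two_mul_choose_two (k : ℕ) : k.choose 2 * 2 = k * (k - 1) := by
  cases k with
  | zero => simp
  | succ m =>
    rw [Nat.choose_two_right]
    have e : m + 1 - 1 = m := rfl
    rw [e]
    have he : 2 ∣ (m + 1) * m := by
      rw [Nat.mul_comm]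
      exact (Nat.even_mul_succ_self m).two_dvd
    rw [Nat.div_mul_cancel he]

lemma arith1 (a : ℕ) : 2 ^ 12 * (a + 1) ≤ (a - 1).choose 2 + 2 ^ 27 := by
  rcases le_or_gt a 8200 with h | h
  · have : 2 ^ 12 * (a + 1) ≤ 2 ^ 12 * 8201 := by
      apply Nat.mul_le_mul_left; omega
    calc 2 ^ 12 * (a + 1) ≤ 2 ^ 12 * 8201 := this
      _ ≤ 2 ^ 27 := by norm_num
      _ ≤ (a - 1).choose 2 + 2 ^ 27 := Nat.le_add_left _ _
  · have hb : ∃ b, a = 8201 + b := ⟨a - 8201, by omega⟩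
    obtain ⟨b, rfl⟩ := hb
    have h1 : (8201 + b) - 1 = 8200 + b := by omega
    have h2 := two_mul_choose_two (8200 + b)
    have h3 : (8200 + b) - 1 = 8199 + b := by omega
    rw [h3] at h2
    rw [h1]
    have key : 2 ^ 12 * (8201 + b + 1) * 2 ≤ (8200 + b).choose 2 * 2 := by
      rw [h2]; nlinarith [sq_nonneg b]
    have := Nat.le_of_mul_le_mul_right key (by norm_num : 0 < 2)
    exact le_trans this (Nat.le_add_right _ _)

lemma arith2 (r : ℕ) : (2 ^ 27 + 1) * r ≤ 9 * r.choose 2 + (2 ^ 27 + 2) ^ 2 := by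
  rcases le_or_gt r (2 ^ 27 + 2) with h | h
  · have : (2 ^ 27 + 1) * r ≤ (2 ^ 27 + 2) * (2 ^ 27 + 2) :=
      Nat.mul_le_mul (by norm_num) h
    calc (2 ^ 27 + 1) * r ≤ (2 ^ 27 + 2) * (2 ^ 27 + 2) := this
      _ = (2 ^ 27 + 2) ^ 2 := (sq _).symm
      _ ≤ _ := Nat.le_add_left _ _
  · have hb : ∃ b, r = 2 ^ 27 + 3 + b := ⟨r - (2 ^ 27 + 3), by omega⟩
    obtain ⟨b, rfl⟩ := hb
    have h2 := two_mul_choose_two (2 ^ 27 + 3 + b)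
    have h3 : (2 ^ 27 + 3 + b) - 1 = 2 ^ 27 + 2 + b := by omega
    rw [h3] at h2
    have key : (2 ^ 27 + 1) * (2 ^ 27 + 3 + b) * 2 ≤ 9 * ((2 ^ 27 + 3 + b).choose 2) * 2 := by
      have : 9 * ((2 ^ 27 + 3 + b).choose 2) * 2 = 9 * ((2 ^ 27 + 3 + b) * (2 ^ 27 + 2 + b)) := by
        rw [mul_assoc, h2]
      rw [this]; nlinarith [sq_nonneg b]
    have := Nat.le_of_mul_le_mul_right key (by norm_num : 0 < 2)
    omega

lemma merge_ineq {A m : ℕ} (hA : 3 ≤ A) (hm : 1 ≤ m) :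
    (A - 1).choose 2 + (m - 1).choose 2 + A * m ≤ (A + m - 1).choose 2 + 1 := by
  obtain ⟨A', rfl⟩ : ∃ A', A = A' + 3 := ⟨A - 3, by omega⟩
  rcases Nat.lt_or_ge m 3 with h | h
  · interval_cases m
    · -- m = 1
      have h1 := two_mul_choose_two (A' + 2)
      have h2 := two_mul_choose_two (A' + 3)
      have e1 : A' + 3 - 1 = A' + 2 := by omega
      have e2 : A' + 2 - 1 = A' + 1 := by omega
      have e3 : A' + 3 + 1 - 1 = A' + 3 := by omega
      rw [e1, e3]
      rw [e2] at h1
      rw [e1] at h2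
      have hz : (1 - 1 : ℕ).choose 2 = 0 := by decide
      rw [hz]
      nlinarith
    · -- m = 2
      have h1 := two_mul_choose_two (A' + 2)
      have h2 := two_mul_choose_two (A' + 4)
      have e1 : A' + 3 - 1 = A' + 2 := by omega
      have e2 : A' + 2 - 1 = A' + 1 := by omega
      have e3 : A' + 3 + 2 - 1 = A' + 4 := by omega
      have e4 : A' + 4 - 1 = A' + 3 := by omega
      rw [e1, e3]
      rw [e2] at h1
      rw [e4] at h2
      have : (2 - 1 : ℕ).choose 2 = 0 := by decide
      rw [this]
      nlinarith
  · obtain ⟨m', rfl⟩ : ∃ m', m = m' + 3 := ⟨m - 3, by omega⟩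
    have h1 := two_mul_choose_two (A' + 2)
    have h2 := two_mul_choose_two (m' + 2)
    have h3 := two_mul_choose_two (A' + m' + 5)
    have e1 : A' + 3 - 1 = A' + 2 := by omega
    have e2 : A' + 2 - 1 = A' + 1 := by omega
    have e3 : m' + 3 - 1 = m' + 2 := by omega
    have e4 : m' + 2 - 1 = m' + 1 := by omega
    have e5 : A' + 3 + (m' + 3) - 1 = A' + m' + 5 := by omega
    have e6 : A' + m' + 5 - 1 = A' + m' + 4 := by omega
    rw [e1, e3, e5]
    rw [e2] at h1
    rw [e4] at h2
    rw [e6] at h3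
    nlinarith

lemma superadd {β : Type*} [DecidableEq β] (s : Finset β) (f : β → ℕ)
    (h : ∀ b ∈ s, 3 ≤ f b) :
    ((∑ b ∈ s, (f b - 1).choose 2) + 9 * (s.card.choose 2) ≤
      ((∑ b ∈ s, f b) - 1).choose 2 + s.card) ∧ 3 * s.card ≤ ∑ b ∈ s, f b := by
  classical
  induction s using Finset.induction_on with
  | empty => simp
  | @insert a s' ha ih =>
    have hfa : 3 ≤ f a := h a (mem_insert_self _ _)
    have ih' := ih (fun b hb => h b (mem_insert_of_mem hb))
    obtain ⟨IH1, IH2⟩ := ih'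
    rw [sum_insert ha, sum_insert ha, card_insert_of_notMem ha]
    constructor
    · rcases Nat.eq_zero_or_pos (∑ b ∈ s', f b) with hm | hm
      · have hcard : s'.card = 0 := by omega
        rw [hm, hcard]
        simp only [Nat.add_zero, Nat.zero_add]
        have : (∑ b ∈ s', (f b - 1).choose 2) = 0 := by
          have : s' = ∅ := card_eq_zero.1 hcard
          simp [this]
        rw [this]
        simp
      · have hchoose : (s'.card + 1).choose 2 = s'.card.choose 2 + s'.card := by
          rw [Nat.choose_succ_succ]
          simp [Nat.choose_one_right, Nat.add_comm]
        have h9r : 9 * s'.card ≤ 3 * (∑ b ∈ s', f b) := by omega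
        have hAm : 3 * (∑ b ∈ s', f b) ≤ f a * (∑ b ∈ s', f b) :=
          Nat.mul_le_mul_right _ hfa
        have hmerge := merge_ineq hfa hm (m := ∑ b ∈ s', f b)
        calc (f a - 1).choose 2 + (∑ b ∈ s', (f b - 1).choose 2) + 9 * ((s'.card + 1).choose 2)
            = ((∑ b ∈ s', (f b - 1).choose 2) + 9 * s'.card.choose 2) +
              ((f a - 1).choose 2 + 9 * s'.card) := by rw [hchoose]; ring
          _ ≤ (((∑ b ∈ s', f b) - 1).choose 2 + s'.card) +
              ((f a - 1).choose 2 + 9 * s'.card) := by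
                exact Nat.add_le_add_right IH1 _
          _ ≤ (((∑ b ∈ s', f b) - 1).choose 2 + (f a - 1).choose 2 + f a * (∑ b ∈ s', f b))
              + s'.card + 1 - 1 + (9 * s'.card - 9 * s'.card):= by omega
          _ ≤ (f a + (∑ b ∈ s', f b) - 1).choose 2 + 1 + s'.card := by
              have := hmerge
              omega
          _ = (f a + (∑ b ∈ s', f b) - 1).choose 2 + (s'.card + 1) := by ring
    · omega

lemma base_count (n : ℕ) : 1 + n + n.choose 2 + (n - 1).choose 2 ≤ n ^ 2 - n + 2 := by
  match n with
  | 0 => simp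
  | 1 => simp
  | (m + 2) =>
    have h1 := two_mul_choose_two (m + 2)
    have h2 := two_mul_choose_two (m + 1)
    have e1 : m + 2 - 1 = m + 1 := by omega
    have e2 : m + 1 - 1 = m := by omega
    rw [e1] at h1 ⊢
    rw [e2] at h2
    have hsq : (m + 2) ^ 2 = (m + 2) * (m + 1) + (m + 2) := by ring
    have hPQ : (m + 2) * (m + 1) = (m + 1) * m + 2 * m + 2 := by ring
    omega

lemma base_count' {n : ℕ} (hn : 1 ≤ n) :
    n ^ 2 - n + 2 ≤ 1 + n + n.choose 2 + (n - 1).choose 2 := by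
  match n, hn with
  | 1, _ => simp
  | (m + 2), _ =>
    have h1 := two_mul_choose_two (m + 2)
    have h2 := two_mul_choose_two (m + 1)
    have e1 : m + 2 - 1 = m + 1 := by omega
    have e2 : m + 1 - 1 = m := by omega
    rw [e1] at h1 ⊢
    rw [e2] at h2
    have hsq : (m + 2) ^ 2 = (m + 2) * (m + 1) + (m + 2) := by ring
    have hPQ : (m + 2) * (m + 1) = (m + 1) * m + 2 * m + 2 := by ring
    omega

lemma mem_Fmatch {e : Finset (Fin 6)} :
    e ∈ Fmatch ↔ e ⊆ {0,1,2} ∨ e ⊆ {3,4,5} ∨ e ⊆ {0,3} := by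
  simp [Fmatch, dClosure]

lemma hasCopy_config {n : ℕ} {E : Finset (Finset (Fin n))} (hE : IsComplex E)
    {t1 t2 : Finset (Fin n)} {x y : Fin n}
    (h1 : t1 ∈ E) (h2 : t2 ∈ E) (c1 : t1.card = 3) (c2 : t2.card = 3)
    (hd : Disjoint t1 t2) (hx : x ∈ t1) (hy : y ∈ t2)
    (hxy : ({x, y} : Finset (Fin n)) ∈ E) : HasCopy Fmatch E := by
  classical
  have e1 : (t1.erase x).card = 2 := by rw [card_erase_of_mem hx, c1]
  have e2 : (t2.erase y).card = 2 := by rw [card_erase_of_mem hy, c2]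
  obtain ⟨a, b, hab, hab'⟩ := card_eq_two.1 e1
  obtain ⟨c, d, hcd, hcd'⟩ := card_eq_two.1 e2
  have ha : a ∈ t1 ∧ a ≠ x := by
    have : a ∈ t1.erase x := by rw [hab']; simp
    exact ⟨mem_of_mem_erase this, ne_of_mem_erase this⟩
  have hb : b ∈ t1 ∧ b ≠ x := by
    have : b ∈ t1.erase x := by rw [hab']; simp
    exact ⟨mem_of_mem_erase this, ne_of_mem_erase this⟩
  have hc : c ∈ t2 ∧ c ≠ y := by
    have : c ∈ t2.erase y := by rw [hcd']; simp
    exact ⟨mem_of_mem_erase this, ne_of_mem_erase this⟩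
  have hdd : d ∈ t2 ∧ d ≠ y := by
    have : d ∈ t2.erase y := by rw [hcd']; simp
    exact ⟨mem_of_mem_erase this, ne_of_mem_erase this⟩
  have ht1 : t1 = {x, a, b} := by rw [← insert_erase hx, hab']
  have ht2 : t2 = {y, c, d} := by rw [← insert_erase hy, hcd']
  have hdis := Finset.disjoint_left.1 hd
  have d1 : x ≠ a := (ha.2).symm
  have d2 : x ≠ b := (hb.2).symm
  have d4 : y ≠ c := (hc.2).symm
  have d5 : y ≠ d := (hdd.2).symm
  have e5 : x ≠ y := fun h => hdis hx (h ▸ hy)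
  have e6 : x ≠ c := fun h => hdis hx (h ▸ hc.1)
  have e7 : x ≠ d := fun h => hdis hx (h ▸ hdd.1)
  have e8 : a ≠ y := fun h => hdis ha.1 (h ▸ hy)
  have e9 : a ≠ c := fun h => hdis ha.1 (h ▸ hc.1)
  have e10 : a ≠ d := fun h => hdis ha.1 (h ▸ hdd.1)
  have e11 : b ≠ y := fun h => hdis hb.1 (h ▸ hy)
  have e12 : b ≠ c := fun h => hdis hb.1 (h ▸ hc.1)
  have e13 : b ≠ d := fun h => hdis hb.1 (h ▸ hdd.1)
  set l : List (Fin n) := [x, a, b, y, c, d] with hl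
  have hnd : l.Nodup := by
    simp [hl, d1, d2, hab, d4, d5, hcd, e5, e6, e7, e8, e9, e10, e11, e12, e13]
  have hlen : l.length = 6 := by simp [hl]
  set f : Fin 6 → Fin n := fun i => l.get (Fin.cast hlen.symm i) with hf
  have hinj : Function.Injective f :=
    (List.nodup_iff_injective_get.mp hnd).comp (Fin.cast_injective _)
  have hf0 : f 0 = x := rfl
  have hf1 : f 1 = a := rfl
  have hf2 : f 2 = b := rfl
  have hf3 : f 3 = y := rfl
  have hf4 : f 4 = c := rfl
  have hf5 : f 5 = d := rfl
  refine ⟨f, hinj, ?_⟩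
  intro e he
  have him1 : ({0,1,2} : Finset (Fin 6)).image f ⊆ t1 := by
    rw [ht1]
    intro z hz
    simp only [mem_image] at hz
    obtain ⟨i, hi, rfl⟩ := hz
    fin_cases hi <;> simp [hf0, hf1, hf2]
  have him2 : ({3,4,5} : Finset (Fin 6)).image f ⊆ t2 := by
    rw [ht2]
    intro z hz
    simp only [mem_image] at hz
    obtain ⟨i, hi, rfl⟩ := hz
    fin_cases hi <;> simp [hf3, hf4, hf5]
  have him3 : ({0,3} : Finset (Fin 6)).image f ⊆ {x, y} := by
    intro z hz
    simp only [mem_image] at hz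
    obtain ⟨i, hi, rfl⟩ := hz
    fin_cases hi <;> simp [hf0, hf3]
  rcases mem_Fmatch.1 he with h | h | h
  · exact hE t1 h1 _ ((image_subset_image h).trans him1)
  · exact hE t2 h2 _ ((image_subset_image h).trans him2)
  · exact hE _ hxy _ ((image_subset_image h).trans him3)


section ClassMachinery
variable {n : ℕ} {E : Finset (Finset (Fin n))}

def Tset (E : Finset (Finset (Fin n))) : Finset (Finset (Fin n)) :=
  E.filter fun e => e.card = 3

def Vcls (E : Finset (Finset (Fin n))) (t : Finset (Fin n)) : Finset (Fin n) :=
  ((Tset E).filter fun s => (s ∩ t).Nonempty).biUnion id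

def f3 (e : Finset (Fin n)) : Finset (Fin n) := ((e.sort (· ≤ ·)).take 3).toFinset

def Bigs (E : Finset (Finset (Fin n))) : Finset (Finset (Fin n)) :=
  E.filter fun e => 3 ≤ e.card

def Kcls (E : Finset (Finset (Fin n))) : Finset (Finset (Fin n)) :=
  (Tset E).image (Vcls E)


lemma mem_Tset {t : Finset (Fin n)} : t ∈ Tset E ↔ t ∈ E ∧ t.card = 3 := by
  simp [Tset]

lemma inter_trans (hE : IsComplex E) (hF : ¬ HasCopy Fmatch E)
    {a b c : Finset (Fin n)} (ha : a ∈ Tset E) (hb : b ∈ Tset E) (hc : c ∈ Tset E)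
    (hab : (a ∩ b).Nonempty) (hbc : (b ∩ c).Nonempty) : (a ∩ c).Nonempty := by
  by_contra hcon
  have hd : Disjoint a c := by
    rw [Finset.disjoint_iff_inter_eq_empty]
    exact not_nonempty_iff_eq_empty.1 hcon
  obtain ⟨x, hx⟩ := hab
  obtain ⟨y, hy⟩ := hbc
  rw [mem_inter] at hx hy
  have hxy : x ≠ y := by
    intro h
    exact hcon ⟨x, mem_inter.2 ⟨hx.1, h ▸ hy.2⟩⟩
  have hpair : ({x, y} : Finset (Fin n)) ∈ E := by
    apply hE b (mem_Tset.1 hb).1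
    intro z hz
    rcases mem_insert.1 hz with rfl | hz
    · exact hx.2
    · rw [mem_singleton.1 hz]; exact hy.1
  exact hF (hasCopy_config hE (mem_Tset.1 ha).1 (mem_Tset.1 hc).1 (mem_Tset.1 ha).2
    (mem_Tset.1 hc).2 hd hx.1 hy.2 hpair)

lemma card_le_five (hE : IsComplex E) (hF : ¬ HasCopy Fmatch E)
    {e : Finset (Fin n)} (he : e ∈ E) : e.card ≤ 5 := by
  by_contra hcon
  push_neg at hcon
  obtain ⟨t1, ht1e, ht1c⟩ := Finset.exists_subset_card_eq (show 3 ≤ e.card by omega)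
  have hsd : 3 ≤ (e \ t1).card := by
    have := card_sdiff_add_card_inter e t1
    have h1 : (e ∩ t1).card ≤ 3 := ht1c ▸ card_le_card inter_subset_right
    omega
  obtain ⟨t2, ht2e, ht2c⟩ := Finset.exists_subset_card_eq hsd
  have hd : Disjoint t1 t2 := by
    apply Finset.disjoint_left.2
    intro z hz1 hz2
    exact (mem_sdiff.1 (ht2e hz2)).2 hz1
  obtain ⟨x, hx⟩ := card_pos.1 (by omega : 0 < t1.card)
  obtain ⟨y, hy⟩ := card_pos.1 (by omega : 0 < t2.card)
  have h1 : t1 ∈ E := hE e he t1 ht1e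
  have h2 : t2 ∈ E := hE e he t2 (ht2e.trans sdiff_subset)
  have hpair : ({x, y} : Finset (Fin n)) ∈ E := by
    apply hE e he
    intro z hz
    rcases mem_insert.1 hz with rfl | hz
    · exact ht1e hx
    · rw [mem_singleton.1 hz]; exact (ht2e.trans sdiff_subset) hy
  have hxy : x ≠ y := fun h => Finset.disjoint_left.1 hd hx (h ▸ hy)
  exact hF (hasCopy_config hE h1 h2 ht1c ht2c hd hx hy hpair)

lemma subset_Vcls {t : Finset (Fin n)} (ht : t ∈ Tset E) : t ⊆ Vcls E t := by
  intro x hx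
  apply mem_biUnion.2
  refine ⟨t, ?_, hx⟩
  apply mem_filter.2
  refine ⟨ht, ⟨x, ?_⟩⟩
  rw [mem_inter]; exact ⟨hx, hx⟩

lemma Vcls_eq (hE : IsComplex E) (hF : ¬ HasCopy Fmatch E)
    {t t' : Finset (Fin n)} (ht : t ∈ Tset E) (ht' : t' ∈ Tset E)
    (hi : (t ∩ t').Nonempty) : Vcls E t = Vcls E t' := by
  unfold Vcls
  congr 1
  apply filter_congr
  intro s hs
  constructor
  · intro h
    exact inter_trans hE hF hs ht ht' h hi
  · intro h
    have : (t' ∩ t).Nonempty := by rwa [inter_comm]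
    exact inter_trans hE hF hs ht' ht h this

lemma Vcls_disjoint (hE : IsComplex E) (hF : ¬ HasCopy Fmatch E)
    {t t' : Finset (Fin n)} (ht : t ∈ Tset E) (ht' : t' ∈ Tset E)
    (hi : ¬ (t ∩ t').Nonempty) : Disjoint (Vcls E t) (Vcls E t') := by
  apply Finset.disjoint_left.2
  intro x hx hx'
  obtain ⟨s, hs, hxs⟩ := mem_biUnion.1 hx
  obtain ⟨s', hs', hxs'⟩ := mem_biUnion.1 hx'
  rw [mem_filter] at hs hs'
  apply hi
  have h1 : (t ∩ s).Nonempty := by rw [inter_comm]; exact hs.2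
  have h2 : (s ∩ s').Nonempty := ⟨x, mem_inter.2 ⟨hxs, hxs'⟩⟩
  have h3 : (t ∩ s').Nonempty := inter_trans hE hF ht hs.1 hs'.1 h1 h2
  exact inter_trans hE hF ht hs'.1 ht' h3 hs'.2

lemma class_inter (hE : IsComplex E) (hF : ¬ HasCopy Fmatch E)
    {t t' : Finset (Fin n)} (ht : t ∈ Tset E) (ht' : t' ∈ Tset E)
    (hv : Vcls E t = Vcls E t') : (t ∩ t').Nonempty := by
  by_contra hcon
  have hd := Vcls_disjoint hE hF ht ht' hcon
  rw [hv, disjoint_self] at hd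
  have hsub := subset_Vcls ht'
  rw [hd, bot_eq_empty] at hsub
  have : t'.card = 0 := card_eq_zero.2 (subset_empty.1 hsub)
  rw [(mem_Tset.1 ht').2] at this
  omega

lemma f3_subset {e : Finset (Fin n)} : f3 e ⊆ e := by
  intro x hx
  rw [f3, List.mem_toFinset] at hx
  exact (Finset.mem_sort _).1 (List.mem_of_mem_take hx)

lemma f3_card {e : Finset (Fin n)} (h : 3 ≤ e.card) : (f3 e).card = 3 := by
  rw [f3, List.toFinset_card_of_nodup ((e.sort_nodup _).sublist (List.take_sublist _ _))]
  rw [List.length_take, Finset.length_sort]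
  omega

lemma f3_eq {e : Finset (Fin n)} (h : e.card = 3) : f3 e = e := by
  rw [f3, List.take_of_length_le (by rw [Finset.length_sort]; omega)]
  exact Finset.sort_toFinset _ _

lemma f3_mem_Tset (hE : IsComplex E) {e : Finset (Fin n)} (he : e ∈ Bigs E) :
    f3 e ∈ Tset E := by
  rw [Bigs, mem_filter] at he
  exact mem_Tset.2 ⟨hE e he.1 _ f3_subset, f3_card he.2⟩

lemma sub_class (hE : IsComplex E) (hF : ¬ HasCopy Fmatch E)
    {e t : Finset (Fin n)} (he : e ∈ Bigs E) (hts : t ⊆ e) (htc : t.card = 3) :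
    Vcls E t = Vcls E (f3 e) := by
  rw [Bigs, mem_filter] at he
  have htT : t ∈ Tset E := mem_Tset.2 ⟨hE e he.1 t hts, htc⟩
  have hf3T : f3 e ∈ Tset E := f3_mem_Tset hE (by rw [Bigs, mem_filter]; exact he)
  apply Vcls_eq hE hF htT hf3T
  rw [← not_disjoint_iff_nonempty_inter]
  intro hd
  have hu : t ∪ f3 e ⊆ e := union_subset hts f3_subset
  have := card_union_of_disjoint hd
  rw [htc, f3_card he.2] at this
  have h5 := card_le_five hE hF he.1
  have := card_le_card hu
  omega

lemma count_small {F : Finset (Finset (Fin n))} {U W : Finset (Fin n)}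
    (h : ∀ e ∈ F, (e \ U).card ≤ 1 ∧ e \ U ⊆ W) :
    F.card ≤ 2 ^ U.card * (W.card + 1) := by
  classical
  have hmain : F.card ≤
      (U.powerset ×ˢ (insert ∅ (W.image fun a => ({a} : Finset (Fin n))))).card := by
    apply card_le_card_of_injOn (fun e => (e ∩ U, e \ U))
    · intro e he
      simp only [mem_coe, mem_product, mem_powerset, mem_insert, mem_image]
      refine ⟨inter_subset_right, ?_⟩
      rcases Nat.le_one_iff_eq_zero_or_eq_one.1 (h e he).1 with h0 | h1
      · left; exact card_eq_zero.1 h0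
      · right
        obtain ⟨a, ha⟩ := card_eq_one.1 h1
        exact ⟨a, (h e he).2 (ha ▸ mem_singleton_self a), ha.symm⟩
    · intro e he e' he' hee
      have h1 : e ∩ U = e' ∩ U := congrArg Prod.fst hee
      have h2 : e \ U = e' \ U := congrArg Prod.snd hee
      calc e = e \ U ∪ e ∩ U := (sdiff_union_inter e U).symm
        _ = e' \ U ∪ e' ∩ U := by rw [h1, h2]
        _ = e' := sdiff_union_inter e' U
  rw [card_product, card_powerset] at hmain
  calc F.card ≤ 2 ^ U.card * (insert ∅ (W.image fun a => ({a} : Finset (Fin n)))).card := hmain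
    _ ≤ 2 ^ U.card * (W.card + 1) := by
        apply Nat.mul_le_mul_left
        calc (insert ∅ (W.image fun a => ({a} : Finset (Fin n)))).card
            ≤ (W.image fun a => ({a} : Finset (Fin n))).card + 1 := card_insert_le _ _
          _ ≤ W.card + 1 := by
              exact Nat.add_le_add_right card_image_le _

end ClassMachinery


section Fiber
variable {n : ℕ} {E : Finset (Finset (Fin n))}

lemma exists_triple_mem {e : Finset (Fin n)} (h3 : 3 ≤ e.card) {x : Fin n} (hx : x ∈ e) :
    ∃ t ⊆ e, x ∈ t ∧ t.card = 3 := by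
  have h2 : 2 ≤ (e.erase x).card := by
    rw [card_erase_of_mem hx]; omega
  obtain ⟨s, hs, hsc⟩ := Finset.exists_subset_card_eq h2
  refine ⟨insert x s, ?_, mem_insert_self _ _, ?_⟩
  · exact insert_subset hx (hs.trans (erase_subset _ _))
  · rw [card_insert_of_notMem (fun hxs => (mem_erase.1 (hs hxs)).1 rfl), hsc]

lemma exists_triple_mem2 {e : Finset (Fin n)} (h3 : 3 ≤ e.card) {x y : Fin n}
    (hx : x ∈ e) (hy : y ∈ e) (hxy : x ≠ y) :
    ∃ t ⊆ e, x ∈ t ∧ y ∈ t ∧ t.card = 3 := by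
  have h2 : 1 ≤ ((e.erase x).erase y).card := by
    rw [card_erase_of_mem (mem_erase.2 ⟨hxy.symm, hy⟩), card_erase_of_mem hx]; omega
  obtain ⟨s, hs, hsc⟩ := Finset.exists_subset_card_eq h2
  have hys : y ∉ s := fun h => (mem_erase.1 (hs h)).1 rfl
  have hxs : x ∉ insert y s := by
    simp only [mem_insert]
    rintro (rfl | h)
    · exact hxy rfl
    · exact (mem_erase.1 ((erase_subset _ _) (hs h))).1 rfl
  refine ⟨insert x (insert y s), ?_, mem_insert_self _ _, ?_, ?_⟩
  · refine insert_subset hx (insert_subset hy (hs.trans ?_))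
    exact (erase_subset _ _).trans (erase_subset _ _)
  · simp
  · rw [card_insert_of_notMem hxs, card_insert_of_notMem hys, hsc]

lemma fib_bound (hE : IsComplex E) (hF : ¬ HasCopy Fmatch E)
    {v : Finset (Fin n)} (hv : v ∈ Kcls E) :
    ((Bigs E).filter fun e => Vcls E (f3 e) = v).card ≤ (v.card - 1).choose 2 + 2 ^ 27 := by
  classical
  obtain ⟨t0, ht0, hvt0⟩ := mem_image.1 hv
  set Fib := (Bigs E).filter fun e => Vcls E (f3 e) = v with hFib
  have hFibmem : ∀ e ∈ Fib, e ∈ E ∧ 3 ≤ e.card ∧ Vcls E (f3 e) = v := by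
    intro e he
    rw [hFib, mem_filter, Bigs, mem_filter] at he
    exact ⟨he.1.1, he.1.2, he.2⟩
  have htriple_cls : ∀ e ∈ Fib, ∀ t ⊆ e, t.card = 3 → t ∈ Tset E ∧ Vcls E t = v := by
    intro e he t hts htc
    obtain ⟨heE, hec, hek⟩ := hFibmem e he
    have heB : e ∈ Bigs E := by rw [Bigs, mem_filter]; exact ⟨heE, hec⟩
    exact ⟨mem_Tset.2 ⟨hE e heE t hts, htc⟩, (sub_class hE hF heB hts htc).trans hek⟩
  have hsubv : ∀ e ∈ Fib, e ⊆ v := by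
    intro e he x hx
    obtain ⟨heE, hec, hek⟩ := hFibmem e he
    obtain ⟨t, hts, hxt, htc⟩ := exists_triple_mem hec hx
    obtain ⟨htT, htv⟩ := htriple_cls e he t hts htc
    exact htv ▸ (subset_Vcls htT hxt)
  have ht0c : t0.card = 3 := (mem_Tset.1 ht0).2
  have ht0F : t0 ∈ Fib := by
    rw [hFib, mem_filter, Bigs, mem_filter]
    refine ⟨⟨(mem_Tset.1 ht0).1, by omega⟩, ?_⟩
    rw [f3_eq ht0c]
    exact hvt0
  have hv3 : 3 ≤ v.card := by
    have := card_le_card ((hvt0 ▸ subset_Vcls ht0 : t0 ⊆ v))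
    omega
  -- triples in the fiber are in Tset with class v
  have htrip : ∀ e ∈ Fib, e.card = 3 → e ∈ Tset E ∧ Vcls E e = v := by
    intro e he hec
    exact htriple_cls e he e Finset.Subset.rfl hec
  by_cases hQ : ∃ u ∈ Fib, 4 ≤ u.card
  · obtain ⟨u, huF, hu4⟩ := hQ
    obtain ⟨huE, huc, huk⟩ := hFibmem u huF
    obtain ⟨w, hwu, hwc⟩ := Finset.exists_subset_card_eq hu4
    have hclaim : ∀ e ∈ Fib, (e \ w).card ≤ 1 := by
      intro e he
      by_contra hcon
      push_neg at hcon
      obtain ⟨x, hx, y, hy, hxy⟩ := one_lt_card.1 (by omega : 1 < (e \ w).card)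
      obtain ⟨heE, hec, hek⟩ := hFibmem e he
      obtain ⟨t, hts, hxt, hyt, htc⟩ :=
        exists_triple_mem2 hec (sdiff_subset hx) (sdiff_subset hy) hxy
      obtain ⟨htT, htv⟩ := htriple_cls e he t hts htc
      -- w ∩ t is small
      have hwt : (w ∩ t).card ≤ 1 := by
        have hsub : w ∩ t ⊆ (t.erase x).erase y := by
          intro z hz
          rw [mem_inter] at hz
          rw [mem_erase, mem_erase]
          refine ⟨?_, ?_, hz.2⟩
          · rintro rfl; exact (mem_sdiff.1 hy).2 hz.1
          · rintro rfl; exact (mem_sdiff.1 hx).2 hz.1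
        have := card_le_card hsub
        rw [card_erase_of_mem (mem_erase.2 ⟨hxy.symm, hyt⟩), card_erase_of_mem hxt, htc] at this
        omega
      have hws : 3 ≤ (w \ t).card := by
        have := card_sdiff_add_card_inter w t
        omega
      obtain ⟨s, hsw, hsc⟩ := Finset.exists_subset_card_eq hws
      have hsu : s ⊆ u := (hsw.trans sdiff_subset).trans hwu
      obtain ⟨hsT, hsv⟩ := htriple_cls u huF s hsu hsc
      have hint := class_inter hE hF htT hsT (htv.trans hsv.symm)
      obtain ⟨z, hz⟩ := hint
      rw [mem_inter] at hz
      exact (mem_sdiff.1 (hsw hz.2)).2 hz.1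
    have hcount : Fib.card ≤ 2 ^ w.card * (v.card + 1) := by
      apply count_small
      intro e he
      exact ⟨hclaim e he, (sdiff_subset).trans (hsubv e he)⟩
    rw [hwc] at hcount
    calc Fib.card ≤ 2 ^ 4 * (v.card + 1) := hcount
      _ ≤ 2 ^ 12 * (v.card + 1) := Nat.mul_le_mul_right _ (by norm_num)
      _ ≤ (v.card - 1).choose 2 + 2 ^ 27 := arith1 v.card
  · push_neg at hQ
    have hc3 : ∀ e ∈ Fib, e.card = 3 := by
      intro e he
      have := (hFibmem e he).2.1
      have := hQ e he
      omega
    by_cases hStar : ∃ z, ∀ e ∈ Fib, z ∈ e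
    · obtain ⟨z, hz⟩ := hStar
      have hzv : z ∈ v := hsubv t0 ht0F (hz t0 ht0F)
      have : Fib.card ≤ ((v.erase z).powersetCard 2).card := by
        apply card_le_card_of_injOn (fun e => e.erase z)
        · intro e he
          rw [mem_coe, mem_powersetCard]
          constructor
          · exact (erase_subset_erase z (hsubv e he))
          · rw [card_erase_of_mem (hz e he), hc3 e he]
        · intro e he e' he' hee
          have hee' : e.erase z = e'.erase z := hee
          have h1 : insert z (e.erase z) = insert z (e'.erase z) := by rw [hee']
          rwa [insert_erase (hz e he), insert_erase (hz e' he')] at h1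
      rw [card_powersetCard, card_erase_of_mem hzv] at this
      omega
    · push_neg at hStar
      choose g hg1 hg2 using hStar
      set U := t0 ∪ t0.biUnion g with hU
      have hUcard : U.card ≤ 12 := by
        calc U.card ≤ t0.card + (t0.biUnion g).card := card_union_le _ _
          _ ≤ t0.card + ∑ z ∈ t0, (g z).card := by
              exact Nat.add_le_add_left (card_biUnion_le) _
          _ ≤ 3 + ∑ z ∈ t0, 3 := by
              rw [ht0c]
              apply Nat.add_le_add_left
              apply Finset.sum_le_sum
              intro z hz
              rw [hc3 _ (hg1 z)]
          _ = 12 := by rw [Finset.sum_const, ht0c]; simp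
      have hclaim : ∀ e ∈ Fib, (e \ U).card ≤ 1 := by
        intro e he
        have hec := hc3 e he
        obtain ⟨heT, hev⟩ := htrip e he hec
        obtain ⟨z, hz⟩ := class_inter hE hF heT (htrip t0 ht0F ht0c).1
          (hev.trans ((htrip t0 ht0F ht0c).2).symm)
        rw [mem_inter] at hz
        have hgz := htrip (g z) (hg1 z) (hc3 _ (hg1 z))
        obtain ⟨y, hy⟩ := class_inter hE hF heT hgz.1 (hev.trans hgz.2.symm)
        rw [mem_inter] at hy
        have hyz : y ≠ z := fun h => hg2 z (h ▸ hy.2)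
        have hpair : ({z, y} : Finset (Fin n)) ⊆ e ∩ U := by
          intro q hq
          rcases mem_insert.1 hq with rfl | hq
          · exact mem_inter.2 ⟨hz.1, subset_union_left (hz.2)⟩
          · rw [mem_singleton.1 hq]
            refine mem_inter.2 ⟨hy.1, subset_union_right ?_⟩
            exact mem_biUnion.2 ⟨z, hz.2, hy.2⟩
        have h2 : 2 ≤ (e ∩ U).card := by
          have hc : ({z, y} : Finset (Fin n)).card = 2 := by
            rw [card_insert_of_notMem (fun h => hyz (mem_singleton.1 h).symm)]; simp
          calc 2 = ({z, y} : Finset (Fin n)).card := hc.symm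
            _ ≤ (e ∩ U).card := card_le_card hpair
        have := card_sdiff_add_card_inter e U
        omega
      have hcount : Fib.card ≤ 2 ^ U.card * (v.card + 1) := by
        apply count_small
        intro e he
        exact ⟨hclaim e he, (sdiff_subset).trans (hsubv e he)⟩
      calc Fib.card ≤ 2 ^ U.card * (v.card + 1) := hcount
        _ ≤ 2 ^ 12 * (v.card + 1) := by
            apply Nat.mul_le_mul_right
            exact Nat.pow_le_pow_right (by norm_num) hUcard
        _ ≤ (v.card - 1).choose 2 + 2 ^ 27 := arith1 v.card

end Fiber


section MainBound
variable {n : ℕ} {E : Finset (Finset (Fin n))}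

lemma main_bound (hE : IsComplex E) (hF : ¬ HasCopy Fmatch E) :
    E.card ≤ n ^ 2 - n + ((2 ^ 27 + 2) ^ 2 + 2) := by
  classical
  -- fiberwise decomposition of Bigs
  have hfib : (Bigs E).card = ∑ v ∈ Kcls E, ((Bigs E).filter fun e => Vcls E (f3 e) = v).card := by
    apply card_eq_sum_card_fiberwise
    intro e he
    exact mem_image.2 ⟨f3 e, f3_mem_Tset hE he, rfl⟩
  have hK3 : ∀ v ∈ Kcls E, 3 ≤ v.card := by
    intro v hv
    obtain ⟨t, ht, rfl⟩ := mem_image.1 hv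
    have := card_le_card (subset_Vcls ht)
    rw [(mem_Tset.1 ht).2] at this
    omega
  have hMn : (∑ v ∈ Kcls E, v.card) ≤ n := by
    have hdisj : ∀ x ∈ Kcls E, ∀ y ∈ Kcls E, x ≠ y → Disjoint (id x) (id y) := by
      intro x hx y hy hxy
      obtain ⟨t, ht, rfl⟩ := mem_image.1 hx
      obtain ⟨t', ht', rfl⟩ := mem_image.1 hy
      by_cases hi : (t ∩ t').Nonempty
      · exact absurd (Vcls_eq hE hF ht ht' hi) hxy
      · exact Vcls_disjoint hE hF ht ht' hi
    calc (∑ v ∈ Kcls E, v.card) = ∑ u ∈ Kcls E, (id u).card := by simp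
      _ = ((Kcls E).biUnion id).card := (Finset.card_biUnion hdisj).symm
      _ ≤ (univ : Finset (Fin n)).card := card_le_card (subset_univ _)
      _ = n := by simp
  have hsum1 : ∑ v ∈ Kcls E, ((Bigs E).filter fun e => Vcls E (f3 e) = v).card ≤
      (∑ v ∈ Kcls E, (v.card - 1).choose 2) + 2 ^ 27 * (Kcls E).card := by
    calc ∑ v ∈ Kcls E, ((Bigs E).filter fun e => Vcls E (f3 e) = v).card
        ≤ ∑ v ∈ Kcls E, ((v.card - 1).choose 2 + 2 ^ 27) := by
          apply Finset.sum_le_sum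
          intro v hv
          exact fib_bound hE hF hv
      _ = (∑ v ∈ Kcls E, (v.card - 1).choose 2) + 2 ^ 27 * (Kcls E).card := by
          rw [Finset.sum_add_distrib, Finset.sum_const]
          simp [Nat.mul_comm]
  obtain ⟨hsup, _⟩ := superadd (Kcls E) Finset.card hK3
  have hMle : ((∑ v ∈ Kcls E, v.card) - 1).choose 2 ≤ (n - 1).choose 2 :=
    Nat.choose_le_choose 2 (by omega)
  have hbigs : (Bigs E).card ≤ (n - 1).choose 2 + (2 ^ 27 + 2) ^ 2 := by
    have h1 : (Bigs E).card + 9 * ((Kcls E).card.choose 2) ≤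
        ((∑ v ∈ Kcls E, v.card) - 1).choose 2 + (Kcls E).card + 2 ^ 27 * (Kcls E).card := by
      rw [hfib]
      omega
    have h2 := arith2 (Kcls E).card
    have h3 : (Kcls E).card + 2 ^ 27 * (Kcls E).card = (2 ^ 27 + 1) * (Kcls E).card := by ring
    omega
  -- small edges
  set S0 := E.filter (fun e => e.card = 0) with hS0
  set S1 := E.filter (fun e => e.card = 1) with hS1
  set S2 := E.filter (fun e => e.card = 2) with hS2
  have hsplit : E.card ≤ S0.card + S1.card + S2.card + (Bigs E).card := by
    have hsub : E ⊆ S0 ∪ S1 ∪ S2 ∪ Bigs E := by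
      intro e he
      simp only [mem_union, hS0, hS1, hS2, Bigs, mem_filter]
      rcases Nat.lt_or_ge e.card 3 with h | h
      · interval_cases he' : e.card
        · exact Or.inl (Or.inl (Or.inl ⟨he, rfl⟩))
        · exact Or.inl (Or.inl (Or.inr ⟨he, rfl⟩))
        · exact Or.inl (Or.inr ⟨he, rfl⟩)
      · exact Or.inr ⟨he, h⟩
    calc E.card ≤ (S0 ∪ S1 ∪ S2 ∪ Bigs E).card := card_le_card hsub
      _ ≤ (S0 ∪ S1 ∪ S2).card + (Bigs E).card := card_union_le _ _
      _ ≤ (S0 ∪ S1).card + S2.card + (Bigs E).card := by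
          have := card_union_le (S0 ∪ S1) S2
          omega
      _ ≤ S0.card + S1.card + S2.card + (Bigs E).card := by
          have := card_union_le S0 S1
          omega
  have hS0c : S0.card ≤ 1 := by
    have : S0 ⊆ {∅} := by
      intro e he
      rw [hS0, mem_filter] at he
      rw [mem_singleton]
      exact card_eq_zero.1 he.2
    calc S0.card ≤ ({∅} : Finset (Finset (Fin n))).card := card_le_card this
      _ = 1 := card_singleton _
  have hS1c : S1.card ≤ n := by
    have hsub : S1 ⊆ (univ : Finset (Fin n)).powersetCard 1 := by
      intro e he
      rw [hS1, mem_filter] at he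
      exact mem_powersetCard.2 ⟨subset_univ _, he.2⟩
    calc S1.card ≤ ((univ : Finset (Fin n)).powersetCard 1).card := card_le_card hsub
      _ = n.choose 1 := by rw [card_powersetCard]; simp
      _ = n := Nat.choose_one_right n
  have hS2c : S2.card ≤ n.choose 2 := by
    have hsub : S2 ⊆ (univ : Finset (Fin n)).powersetCard 2 := by
      intro e he
      rw [hS2, mem_filter] at he
      exact mem_powersetCard.2 ⟨subset_univ _, he.2⟩
    calc S2.card ≤ ((univ : Finset (Fin n)).powersetCard 2).card := card_le_card hsub
      _ = n.choose 2 := by rw [card_powersetCard]; simp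
  have hbase := base_count n
  omega

end MainBound


section Lower
variable {n : ℕ}

lemma exSC_bddAbove (F : Finset (Finset (Fin 6))) :
    BddAbove {m | ∃ E : Finset (Finset (Fin n)), IsComplex E ∧ ¬ HasCopy F E ∧ E.card = m} := by
  refine ⟨2 ^ n, ?_⟩
  rintro m ⟨E, _, _, rfl⟩
  calc E.card ≤ (univ : Finset (Finset (Fin n))).card := card_le_univ E
    _ = Fintype.card (Finset (Fin n)) := card_univ
    _ = 2 ^ Fintype.card (Fin n) := Fintype.card_finset
    _ = 2 ^ n := by rw [Fintype.card_fin]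

lemma lower_bound (hn : 1 ≤ n) : n ^ 2 - n + 2 ≤ exSC n Fmatch := by
  classical
  set v0 : Fin n := ⟨0, hn⟩ with hv0
  set P1 : Finset (Finset (Fin n)) :=
    (range 3).biUnion (fun i => (univ : Finset (Fin n)).powersetCard i) with hP1
  set B : Finset (Finset (Fin n)) :=
    ((univ : Finset (Fin n)).powersetCard 3).filter (fun e => v0 ∈ e) with hB
  have hmemP1 : ∀ e : Finset (Fin n), e ∈ P1 ↔ e.card ≤ 2 := by
    intro e
    simp only [hP1, mem_biUnion, mem_range, mem_powersetCard]
    constructor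
    · rintro ⟨i, hi, _, rfl⟩; omega
    · intro h; exact ⟨e.card, by omega, subset_univ _, rfl⟩
  have hmemB : ∀ e : Finset (Fin n), e ∈ B ↔ e.card = 3 ∧ v0 ∈ e := by
    intro e
    simp only [hB, mem_filter, mem_powersetCard]
    constructor
    · rintro ⟨⟨_, h⟩, h2⟩; exact ⟨h, h2⟩
    · rintro ⟨h1, h2⟩; exact ⟨⟨subset_univ _, h1⟩, h2⟩
  set Elow := P1 ∪ B with hElow
  have hcomplex : IsComplex Elow := by
    intro e he f hf
    rcases mem_union.1 he with he | he
    · apply mem_union_left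
      rw [hmemP1] at he ⊢
      exact le_trans (card_le_card hf) he
    · rw [hmemB] at he
      rcases Nat.lt_or_ge f.card 3 with h | h
      · exact mem_union_left _ ((hmemP1 f).2 (by omega))
      · have hfe : f = e := eq_of_subset_of_card_le hf (by omega)
        exact mem_union_right _ ((hmemB f).2 (hfe ▸ ⟨he.1, he.2⟩))
  have hfree : ¬ HasCopy Fmatch Elow := by
    rintro ⟨f, hinj, hmap⟩
    have h1 : ({0,1,2} : Finset (Fin 6)).image f ∈ Elow :=
      hmap _ (mem_Fmatch.2 (Or.inl (Finset.Subset.rfl)))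
    have h2 : ({3,4,5} : Finset (Fin 6)).image f ∈ Elow :=
      hmap _ (mem_Fmatch.2 (Or.inr (Or.inl Finset.Subset.rfl)))
    have hc1 : (({0,1,2} : Finset (Fin 6)).image f).card = 3 := by
      rw [card_image_of_injective _ hinj]; decide
    have hc2 : (({3,4,5} : Finset (Fin 6)).image f).card = 3 := by
      rw [card_image_of_injective _ hinj]; decide
    have hv1 : v0 ∈ ({0,1,2} : Finset (Fin 6)).image f := by
      rcases mem_union.1 h1 with h | h
      · rw [hmemP1] at h; omega
      · exact ((hmemB _).1 h).2
    have hv2 : v0 ∈ ({3,4,5} : Finset (Fin 6)).image f := by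
      rcases mem_union.1 h2 with h | h
      · rw [hmemP1] at h; omega
      · exact ((hmemB _).1 h).2
    obtain ⟨i, hi, hfi⟩ := mem_image.1 hv1
    obtain ⟨j, hj, hfj⟩ := mem_image.1 hv2
    have hij : i = j := hinj (by rw [hfi, hfj])
    subst hij
    clear hfi hfj
    revert hi hj
    revert i
    decide
  have hcard : n ^ 2 - n + 2 ≤ Elow.card := by
    have hdisjPB : Disjoint P1 B := by
      rw [disjoint_left]
      intro e he1 he2
      rw [hmemP1] at he1
      rw [hmemB] at he2
      omega
    have hcardP1 : P1.card = 1 + n + n.choose 2 := by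
      rw [hP1, card_biUnion]
      · rw [show range 3 = {0, 1, 2} by rfl]
        rw [Finset.sum_insert (by decide), Finset.sum_insert (by decide), Finset.sum_singleton]
        rw [card_powersetCard, card_powersetCard, card_powersetCard]
        simp [Nat.choose_one_right]
        ring
      · intro x hx y hy hxy
        show Disjoint (powersetCard x (univ : Finset (Fin n))) (powersetCard y univ)
        rw [disjoint_left]
        intro e he1 he2
        rw [mem_powersetCard] at he1 he2
        exact hxy (he1.2 ▸ he2.2 ▸ rfl)
    have hcardB : B.card = (n - 1).choose 2 := by
      have : B.card = ((univ.erase v0).powersetCard 2).card := by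
        apply card_bij' (fun e _ => e.erase v0) (fun s _ => insert v0 s) ?hi ?hj ?li ?ri
        case hi =>
          intro e he
          rw [hmemB] at he
          rw [mem_powersetCard]
          constructor
          · exact erase_subset_erase _ (subset_univ _)
          · rw [card_erase_of_mem he.2, he.1]
        case hj =>
          intro s hs
          rw [mem_powersetCard] at hs
          have hv0s : v0 ∉ s := fun h => (mem_erase.1 (hs.1 h)).1 rfl
          rw [hmemB]
          constructor
          · rw [card_insert_of_notMem hv0s, hs.2]
          · exact mem_insert_self _ _
        case li =>
          intro e he
          rw [hmemB] at he
          exact insert_erase he.2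
        case ri =>
          intro s hs
          rw [mem_powersetCard] at hs
          exact erase_insert (fun h => (mem_erase.1 (hs.1 h)).1 rfl)
      rw [this, card_powersetCard, card_erase_of_mem (mem_univ _)]
      simp
    rw [hElow, card_union_of_disjoint hdisjPB, hcardP1, hcardB]
    exact base_count' hn
  have hmem : Elow.card ∈
      {m | ∃ E : Finset (Finset (Fin n)), IsComplex E ∧ ¬ HasCopy Fmatch E ∧ E.card = m} :=
    ⟨Elow, hcomplex, hfree, rfl⟩
  exact le_trans hcard (le_csSup (exSC_bddAbove Fmatch) hmem)

end Lower

theorem statement3 : ∃ C : ℕ,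
    (∀ n : ℕ, 1 ≤ n → n ^ 2 - n + 2 ≤ exSC n Fmatch) ∧
    (∀ n : ℕ, exSC n Fmatch ≤ n ^ 2 - n + C) := by
  refine ⟨(2 ^ 27 + 2) ^ 2 + 2, fun n hn => lower_bound hn, fun n => ?_⟩
  apply csSup_le
  · refine ⟨0, (∅ : Finset (Finset (Fin n))), ?_, ?_, rfl⟩
    · intro e he
      exact absurd he (Finset.notMem_empty e)
    · rintro ⟨f, _, hmap⟩
      have := hmap ∅ (mem_Fmatch.2 (Or.inl (Finset.empty_subset _)))
      simp at this
  · rintro m ⟨E, hE, hF, rfl⟩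
    exact main_bound hE hF
end

section
/- For every n ≥ 5, every simplicial complex H on n vertices with e(H) > (n^{5/2} + 3n²)/2 contains five vertices that together span at least 17 edges of H; equivalently, ex(n, 𝓕(5,2)) ≤ (n^{5/2} + 3n²)/2 for every n ≥ 5. -/
open Finset

/-- `ex(n, 𝓕(5,2))`: the extremal number for the family of all simplicial complexes
on 5 vertices with exactly 17 edges -/
noncomputable def exF52 (n : ℕ) : ℕ :=
  sSup {m | ∃ E : Finset (Finset (Fin n)), IsComplex E ∧
    (∀ S : Finset (Finset (Fin 5)), IsComplex S → S.card = 17 → ¬ HasCopy S E) ∧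
    E.card = m}

/-!
If some edge has at least four vertices, then either every edge lies in one 4-set, so there
are at most 16 edges, or a vertex outside that 4-set gives 17 edges on five vertices.
Otherwise only the 3-edges need counting. For a pair `(v, x)` let `L(v, x)` be the set of
third vertices `w` with `{v, x, w}` an edge. Two links `L(v, x)`, `L(v, x')` share at most one
vertex: two common vertices `y, z` would make `v, x, x', y, z` span the 18 faces of the cone
over the 4-cycle `x y x' z`. So for fixed `v` the sets of ordered pairs of distinct vertices
of the `L(v, x)` are disjoint, whence `∑ |L(v, x)| (|L(v, x)| - 1) ≤ n³`, and Cauchy–Schwarz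
over the `n²` pairs gives `∑ |L(v, x)| ≤ n² + n^{5/2}`. Every 3-edge is counted at least
twice in that sum, and there are at most `(n² + n + 2) / 2` edges of size at most 2.
-/

variable {α : Type*} [DecidableEq α]

namespace IsComplex

theorem filter_subset {E : Finset (Finset α)} (hE : IsComplex E) (S : Finset α) :
    IsComplex (E.filter (· ⊆ S)) := fun e he f hf => by
  rw [mem_filter] at he ⊢
  exact ⟨hE e he.1 f hf, hf.trans he.2⟩

theorem erase_of_forall_card_le {C : Finset (Finset α)} (hC : IsComplex C) {e : Finset α}
    (hmax : ∀ g ∈ C, g.card ≤ e.card) : IsComplex (C.erase e) := by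
  intro g hg f hf
  refine mem_erase.2 ⟨?_, hC g (mem_of_mem_erase hg) f hf⟩
  rintro rfl
  exact (mem_erase.1 hg).1 (eq_of_subset_of_card_le hf (hmax g (mem_of_mem_erase hg))).symm

theorem exists_subset_card_eq {C : Finset (Finset α)} (hC : IsComplex C) {m : ℕ}
    (hm : m ≤ C.card) : ∃ C' ⊆ C, IsComplex C' ∧ C'.card = m := by
  induction C using Finset.strongInduction with
  | H C ih =>
    rcases hm.eq_or_lt with rfl | hlt
    · exact ⟨C, Subset.rfl, hC, rfl⟩
    obtain ⟨e, heC, hmax⟩ := exists_max_image C card (card_pos.1 (by omega))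
    obtain ⟨C', hC'C, hC', rfl⟩ := ih _ (erase_ssubset heC) (hC.erase_of_forall_card_le hmax)
      (by rw [card_erase_of_mem heC]; omega)
    exact ⟨C', hC'C.trans (erase_subset _ _), hC', rfl⟩

theorem exists_hasCopy {E : Finset (Finset α)} (hE : IsComplex E) {S : Finset α} {k m : ℕ}
    (hS : S.card = k) (hm : m ≤ (E.filter (· ⊆ S)).card) :
    ∃ F : Finset (Finset (Fin k)), IsComplex F ∧ F.card = m ∧ HasCopy F E := by
  obtain ⟨C, hCS, hC, rfl⟩ := (hE.filter_subset S).exists_subset_card_eq hm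
  let f : Fin k ↪ α :=
    (S.equivFinOfCardEq hS).symm.toEmbedding.trans (Function.Embedding.subtype _)
  have hSf : S ⊆ univ.map f := fun a ha =>
    mem_map.2 ⟨S.equivFinOfCardEq hS ⟨a, ha⟩, mem_univ _, by simp [f]⟩
  have hCf : ∀ t ∈ C, ∃ u : Finset (Fin k), u.map f = t := fun t ht => by
    obtain ⟨u, -, rfl⟩ := subset_map_iff.1 ((mem_filter.1 (hCS ht)).2.trans hSf)
    exact ⟨u, rfl⟩
  refine ⟨univ.filter (fun u : Finset (Fin k) => u.map f ∈ C), ?_, ?_, f, f.injective, ?_⟩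
  · intro u hu v hv
    rw [mem_filter] at hu ⊢
    exact ⟨mem_univ _, hC _ hu.2 _ (map_subset_map.2 hv)⟩
  · refine card_bij (fun u _ => u.map f) (fun u hu => (mem_filter.1 hu).2)
      (fun u _ v _ h => map_injective f h) (fun t ht => ?_)
    obtain ⟨u, rfl⟩ := hCf t ht
    exact ⟨u, mem_filter.2 ⟨mem_univ _, ht⟩, rfl⟩
  · intro u hu
    rw [← map_eq_image]
    exact (mem_filter.1 (hCS (mem_filter.1 hu).2)).1

end IsComplex

theorem HasCopy.exists_card_le {β : Type*} [Fintype β] [DecidableEq β]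
    {F : Finset (Finset β)} {E : Finset (Finset α)} (h : HasCopy F E) :
    ∃ S : Finset α, S.card = Fintype.card β ∧ F.card ≤ (E.filter (· ⊆ S)).card := by
  obtain ⟨f, hf, hFE⟩ := h
  refine ⟨univ.image f, by rw [card_image_of_injective _ hf, card_univ], ?_⟩
  rw [← card_image_of_injective F (image_injective hf)]
  refine card_le_card fun t ht => ?_
  obtain ⟨u, hu, rfl⟩ := mem_image.1 ht
  exact mem_filter.2 ⟨hFE u hu, image_subset_image (subset_univ u)⟩

theorem card_le_sixteen_of_four_le_card_mem {E : Finset (Finset α)} (hE : IsComplex E)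
    (h17 : ∀ S : Finset α, S.card = 5 → (E.filter (· ⊆ S)).card < 17) {e : Finset α}
    (he : e ∈ E) (he4 : 4 ≤ e.card) : E.card ≤ 16 := by
  obtain ⟨F, hFe, hF4⟩ := exists_subset_card_eq he4
  by_contra! hcard
  obtain ⟨g, hgE, hgF⟩ : ∃ g ∈ E, ¬g ⊆ F := by
    by_contra! hall
    have := card_le_card fun g hg => mem_powerset.2 (hall g hg)
    rw [card_powerset, hF4] at this
    omega
  obtain ⟨w, hwg, hwF⟩ := not_subset.1 hgF
  have hspan : insert {w} F.powerset ⊆ E.filter (· ⊆ insert w F) := by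
    refine insert_subset (mem_filter.2 ⟨hE g hgE _ (singleton_subset_iff.2 hwg), by simp⟩)
      fun u hu => mem_filter.2 ⟨hE e he u ((mem_powerset.1 hu).trans hFe),
        (mem_powerset.1 hu).trans (subset_insert _ _)⟩
  have h17' := card_le_card hspan
  rw [card_insert_of_notMem (by simpa using hwF), card_powerset, hF4] at h17'
  exact (h17 _ (by rw [card_insert_of_notMem hwF, hF4])).not_ge h17'

theorem le_add_sqrt_of_sq_le_mul {s m N : ℝ} (hm : 0 ≤ m) (hN : 0 ≤ N)
    (h : s ^ 2 ≤ m * (N + s)) : s ≤ m + √(m * N) := by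
  have hr := Real.sq_sqrt (mul_nonneg hm hN)
  have hr0 := Real.sqrt_nonneg (m * N)
  nlinarith

theorem sum_card_le_of_sum_card_offDiag_le {ι β : Type*} [Fintype ι] [DecidableEq β]
    (L : ι → Finset β) {N : ℝ} (h : ∑ i, ((L i).offDiag.card : ℝ) ≤ N) :
    ∑ i, ((L i).card : ℝ) ≤ Fintype.card ι + √(Fintype.card ι * N) := by
  have hsq : ∀ i, ((L i).card : ℝ) ^ 2 = (L i).offDiag.card + (L i).card := fun i => by
    rw [offDiag_card, Nat.cast_sub (Nat.le_mul_self _)]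
    push_cast
    ring
  have hCS := sq_sum_le_card_mul_sum_sq (s := univ) (f := fun i => ((L i).card : ℝ))
  simp only [hsq, sum_add_distrib, card_univ] at hCS
  exact le_add_sqrt_of_sq_le_mul (by positivity)
    ((sum_nonneg fun i _ => by positivity).trans h)
    (hCS.trans (mul_le_mul_of_nonneg_left (by linarith) (by positivity)))

/-- The cone with apex `0` over the 4-cycle `1, 3, 2, 4`. -/
def coneOverSquare : Finset (Finset (Fin 5)) :=
  dClosure {{0, 1, 3}, {0, 1, 4}, {0, 2, 3}, {0, 2, 4}}

theorem card_coneOverSquare : coneOverSquare.card = 18 := by decide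

section Fintype

variable [Fintype α]

def pairLink (E : Finset (Finset α)) (p : α × α) : Finset α :=
  univ.filter fun w => p.1 ≠ p.2 ∧ w ≠ p.1 ∧ w ≠ p.2 ∧ {p.1, p.2, w} ∈ E

theorem mem_pairLink {E : Finset (Finset α)} {v x w : α} :
    w ∈ pairLink E (v, x) ↔ v ≠ x ∧ w ≠ v ∧ w ≠ x ∧ {v, x, w} ∈ E := by
  simp [pairLink]

theorem two_mul_card_filter_card_eq_three_le_sum_card_pairLink (E : Finset (Finset α)) :
    2 * (E.filter (·.card = 3)).card ≤ ∑ p : α × α, (pairLink E p).card := by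
  rw [← card_sigma]
  refine mul_card_image_le_card_of_maps_to (f := fun q => {q.1.1, q.1.2, q.2}) ?_ 2 ?_
  · rintro ⟨⟨v, x⟩, w⟩ hq
    obtain ⟨hvx, hwv, hwx, hE⟩ := mem_pairLink.1 (mem_sigma.1 hq).2
    exact mem_filter.2 ⟨hE, card_eq_three.2 ⟨v, x, w, hvx, hwv.symm, hwx.symm, rfl⟩⟩
  · intro t ht
    obtain ⟨htE, ht3⟩ := mem_filter.1 ht
    obtain ⟨a, b, c, hab, hac, hbc, rfl⟩ := card_eq_three.1 ht3
    have hba : ({b, a, c} : Finset α) = {a, b, c} := insert_comm b a {c}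
    calc 2 = ({⟨(a, b), c⟩, ⟨(b, a), c⟩} : Finset ((_ : α × α) × α)).card :=
          (card_pair (by simp [hab])).symm
      _ ≤ _ := by
        refine card_le_card ?_
        simp only [insert_subset_iff, singleton_subset_iff, mem_filter, mem_sigma, mem_univ,
          true_and, mem_pairLink, hba]
        exact ⟨⟨⟨hab, hac.symm, hbc.symm, htE⟩, trivial⟩,
          ⟨⟨hab.symm, hbc.symm, hac.symm, htE⟩, trivial⟩⟩

theorem disjoint_offDiag_pairLink {E : Finset (Finset α)} (hE : IsComplex E)
    (h18 : ∀ S : Finset α, S.card = 5 → (E.filter (· ⊆ S)).card < 18) {v x x' : α}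
    (hx : x ≠ x') : Disjoint (pairLink E (v, x)).offDiag (pairLink E (v, x')).offDiag := by
  rw [disjoint_left]
  rintro ⟨y, z⟩ hyz hyz'
  simp only [mem_offDiag, mem_pairLink] at hyz hyz'
  obtain ⟨⟨hvx, hyv, hyx, hvxy⟩, ⟨-, hzv, hzx, hvxz⟩, hyz⟩ := hyz
  obtain ⟨⟨hvx', hyv', hyx', hvx'y⟩, ⟨-, hzv', hzx', hvx'z⟩, -⟩ := hyz'
  have hcopy : HasCopy coneOverSquare E := by
    refine ⟨![v, x, x', y, z], ?_, ?_⟩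
    · simp only [Matrix.vecCons, Fin.cons_injective_iff]
      simp [Function.injective_of_subsingleton]
      exact ⟨⟨hzv.symm, hyv.symm, hvx', hvx⟩, ⟨hzx.symm, hyx.symm, hx⟩, ⟨hzx'.symm, hyx'.symm⟩, hyz⟩
    · intro e he
      simp only [coneOverSquare, dClosure, mem_biUnion, mem_insert, mem_singleton,
        exists_eq_or_imp, exists_eq_left, mem_powerset] at he
      rcases he with he | he | he | he <;> refine hE _ ?_ _ (image_subset_image he) <;>
        simpa [image_insert]
  obtain ⟨S, hS, h18S⟩ := hcopy.exists_card_le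
  rw [card_coneOverSquare] at h18S
  exact (h18 S (by simpa using hS)).not_ge h18S

theorem sum_card_offDiag_pairLink_le {E : Finset (Finset α)} (hE : IsComplex E)
    (h18 : ∀ S : Finset α, S.card = 5 → (E.filter (· ⊆ S)).card < 18) :
    ∑ p : α × α, (pairLink E p).offDiag.card ≤ Fintype.card α ^ 3 := by
  rw [Fintype.sum_prod_type]
  calc ∑ v, ∑ x, (pairLink E (v, x)).offDiag.card ≤ ∑ _v : α, Fintype.card (α × α) := by
        refine sum_le_sum fun v _ => ?_
        rw [← card_biUnion fun x _ x' _ hx => disjoint_offDiag_pairLink hE h18 hx]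
        exact card_le_univ _
    _ = Fintype.card α ^ 3 := by simp [Fintype.card_prod]; ring

theorem card_filter_card_eq_three_le {E : Finset (Finset α)} (hE : IsComplex E)
    (h18 : ∀ S : Finset α, S.card = 5 → (E.filter (· ⊆ S)).card < 18) :
    ((E.filter (·.card = 3)).card : ℝ) ≤
      ((Fintype.card α : ℝ) ^ ((5 : ℝ) / 2) + (Fintype.card α : ℝ) ^ 2) / 2 := by
  have hT : 2 * ((E.filter (·.card = 3)).card : ℝ) ≤ ∑ p : α × α, ((pairLink E p).card : ℝ) := by
    exact_mod_cast two_mul_card_filter_card_eq_three_le_sum_card_pairLink E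
  have hoff : ∑ p : α × α, ((pairLink E p).offDiag.card : ℝ) ≤ (Fintype.card α : ℝ) ^ 3 := by
    exact_mod_cast sum_card_offDiag_pairLink_le hE h18
  have hroot : √(Fintype.card (α × α) * (Fintype.card α : ℝ) ^ 3) =
      (Fintype.card α : ℝ) ^ ((5 : ℝ) / 2) := by
    rw [Fintype.card_prod, Real.sqrt_eq_rpow, show (5 : ℝ) / 2 = (5 : ℕ) * (1 / 2) by norm_num,
      Real.rpow_natCast_mul (by positivity)]
    push_cast
    ring_nf
  have hsum := sum_card_le_of_sum_card_offDiag_le (pairLink E) hoff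
  rw [hroot, Fintype.card_prod] at hsum
  push_cast at hsum
  linarith

theorem card_le_of_forall_card_le_two {E : Finset (Finset α)}
    (hE : ∀ e ∈ E, e.card ≤ 2) :
    (E.card : ℝ) ≤ ((Fintype.card α : ℝ) ^ 2 + Fintype.card α + 2) / 2 := by
  have hsub : E ⊆ (range 3).biUnion fun i => powersetCard i univ := fun e he =>
    mem_biUnion.2 ⟨e.card, mem_range.2 (by linarith [hE e he]), mem_powersetCard_univ.2 rfl⟩
  have hcard : E.card ≤ ∑ i ∈ range 3, (Fintype.card α).choose i := by
    simpa using (card_le_card hsub).trans card_biUnion_le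
  have : (E.card : ℝ) ≤ ∑ i ∈ range 3, ((Fintype.card α).choose i : ℝ) := by exact_mod_cast hcard
  simp only [sum_range_succ, range_zero, sum_empty, Nat.choose_zero_right, Nat.choose_one_right,
    Nat.cast_choose_two] at this
  push_cast at this
  linarith

theorem card_le_of_forall_card_filter_subset_lt_seventeen {E : Finset (Finset α)}
    (hE : IsComplex E) (hα : 2 ≤ Fintype.card α)
    (h17 : ∀ S : Finset α, S.card = 5 → (E.filter (· ⊆ S)).card < 17) :
    (E.card : ℝ) ≤ ((Fintype.card α : ℝ) ^ ((5 : ℝ) / 2) + 3 * (Fintype.card α : ℝ) ^ 2) / 2 := by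
  have hroot : 0 ≤ (Fintype.card α : ℝ) ^ ((5 : ℝ) / 2) := by positivity
  by_cases hbig : ∃ e ∈ E, 4 ≤ e.card
  · obtain ⟨e, he, he4⟩ := hbig
    have h16 : (E.card : ℝ) ≤ 16 := by
      exact_mod_cast card_le_sixteen_of_four_le_card_mem hE h17 he he4
    have h4 : (4 : ℝ) ≤ Fintype.card α := by exact_mod_cast he4.trans (card_le_univ e)
    nlinarith
  · push Not at hbig
    have hT := card_filter_card_eq_three_le hE fun S hS => (h17 S hS).trans (by norm_num)
    have hP := card_le_of_forall_card_le_two (E := E.filter (¬·.card = 3)) fun e he => by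
      have := hbig e (mem_filter.1 he).1
      have := (mem_filter.1 he).2
      omega
    have h2 : (2 : ℝ) ≤ Fintype.card α := by exact_mod_cast hα
    rw [← card_filter_add_card_filter_not (·.card = 3)]
    push_cast
    nlinarith

end Fintype

theorem exists_card_eq_exF52 (n : ℕ) :
    ∃ E : Finset (Finset (Fin n)), IsComplex E ∧
      (∀ S : Finset (Finset (Fin 5)), IsComplex S → S.card = 17 → ¬ HasCopy S E) ∧
      E.card = exF52 n := by
  refine Nat.sSup_mem (s := {m | ∃ E : Finset (Finset (Fin n)), IsComplex E ∧
      (∀ S : Finset (Finset (Fin 5)), IsComplex S → S.card = 17 → ¬ HasCopy S E) ∧ E.card = m})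
    ⟨0, ∅, fun _ h => absurd h (notMem_empty _), ?_, rfl⟩ ⟨2 ^ n, ?_⟩
  · rintro S - hS ⟨f, -, hf⟩
    obtain ⟨e, he⟩ := card_pos.1 (hS ▸ by norm_num : 0 < S.card)
    exact notMem_empty _ (hf e he)
  · rintro m ⟨E, -, -, rfl⟩
    simpa using card_le_univ E

theorem statement8 (n : ℕ) (hn : 5 ≤ n) :
    (∀ E : Finset (Finset (Fin n)), IsComplex E →
      (E.card : ℝ) > ((n : ℝ) ^ ((5 : ℝ) / 2) + 3 * (n : ℝ) ^ 2) / 2 →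
      ∃ S : Finset (Fin n), S.card = 5 ∧ 17 ≤ (E.filter (fun e => e ⊆ S)).card) ∧
    (exF52 n : ℝ) ≤ ((n : ℝ) ^ ((5 : ℝ) / 2) + 3 * (n : ℝ) ^ 2) / 2 := by
  have h2 : 2 ≤ Fintype.card (Fin n) := by rw [Fintype.card_fin]; omega
  refine ⟨fun E hE hcard => ?_, ?_⟩
  · by_contra! h17
    have := card_le_of_forall_card_filter_subset_lt_seventeen hE h2 h17
    rw [Fintype.card_fin] at this
    exact hcard.not_ge this
  · obtain ⟨E, hE, hfree, hcard⟩ := exists_card_eq_exF52 n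
    have := card_le_of_forall_card_filter_subset_lt_seventeen hE h2 fun S hS => by
      by_contra! h17
      obtain ⟨F, hF, hF17, hcopy⟩ := hE.exists_hasCopy hS h17
      exact hfree F hF hF17 hcopy
    rwa [Fintype.card_fin, hcard] at this
end
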